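/- For random transpositions on the complete graph with d ≥ 2 vertices and d letters: for every function f on permutations of d letters, Var_d(f) ≤ (1/(4d)) Σ_{x,y} ν_d[(∇_{x,y}f)^2], where ∇_{x,y}f(η) = f(η^{x,y}) − f(η) and η^{x,y} is η with letters at x and y swapped. -/

import Mathlib

/-!
Write `L f η = ∑ x, ∑ y, (f η - f (η * swap x y))` for the generator, so that the Dirichlet form is
`2 ⟨f, L f⟩`. Since `L` is symmetric, it suffices that every eigenvalue of `L` on mean-zero
functions is at least `2n`, which we prove by induction on `n`. On a mean-zero `f`, `L` multiplies
each marginal `a ↦ ∑_{η v = a} f η` by `2n`, so for an eigenfunction `f` with eigenvalue `μ`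
either some marginal is nonzero and `μ = 2n`, or all of them vanish. In the latter case, for
every vertex `v` the function `f` has mean zero on each fibre `{η v = a} ≃ Perm (Fin (n - 1))`,
and the induction hypothesis bounds `4 (n - 1) ‖f‖²` by the energy of the transpositions avoiding
`v`. Averaging over `v` gives `4 n (n - 1) ‖f‖² ≤ (n - 2) · 2 μ ‖f‖²`, hence `μ > 2n`.
-/

/-- Expectation of `f` under the uniform measure `ν_d` on permutations of `d` letters. -/
noncomputable def pexp (d : ℕ) (f : Equiv.Perm (Fin d) → ℝ) : ℝ :=
  (∑ η : Equiv.Perm (Fin d), f η) / (Nat.factorial d : ℝ)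

open Finset Equiv Module.End

theorem LinearMap.IsSymmetric.mul_norm_sq_le_inner_map_self {E : Type*} [NormedAddCommGroup E]
    [InnerProductSpace ℝ E] [FiniteDimensional ℝ E] {T : E →ₗ[ℝ] E} (hT : T.IsSymmetric)
    {c : ℝ} (hc : ∀ μ, HasEigenvalue T μ → c ≤ μ) (x : E) :
    c * ‖x‖ ^ 2 ≤ inner ℝ (T x) x := by
  set b := hT.eigenvectorBasis rfl
  have hnorm : ‖x‖ ^ 2 = ∑ i, b.repr x i ^ 2 := by
    rw [← b.repr.norm_map, EuclideanSpace.norm_sq_eq]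
    simp
  have hinner : inner ℝ (T x) x = ∑ i, hT.eigenvalues rfl i * b.repr x i ^ 2 := by
    rw [← b.repr.inner_map_map, PiLp.inner_apply]
    refine sum_congr rfl fun i _ => ?_
    rw [hT.eigenvectorBasis_apply_self_apply]
    simp only [Real.ringHom_apply, RCLike.inner_apply]
    ring
  rw [hnorm, hinner, mul_sum]
  exact sum_le_sum fun i _ =>
    mul_le_mul_of_nonneg_right (hc _ (hT.hasEigenvalue_eigenvalues rfl i)) (sq_nonneg _)

theorem mul_dotProduct_self_le_of_forall_hasEigenvalue {ι : Type*} [Fintype ι]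
    {B : Module.End ℝ (ι → ℝ)} (hB : ∀ f g, B f ⬝ᵥ g = f ⬝ᵥ B g) {c : ℝ}
    (hc : ∀ μ, HasEigenvalue B μ → c ≤ μ) (f : ι → ℝ) : c * (f ⬝ᵥ f) ≤ B f ⬝ᵥ f := by
  set e := (WithLp.linearEquiv 2 ℝ (ι → ℝ)).symm
  set T := e.conjAlgEquiv ℝ B
  have hT : T.IsSymmetric := fun x y => by
    simpa [T, e, PiLp.inner_apply, dotProduct, mul_comm] using (hB y x).symm
  have hTc : ∀ μ, HasEigenvalue T μ → c ≤ μ := fun μ hμ => hc μ <| by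
    rwa [hasEigenvalue_iff_mem_spectrum, AlgEquiv.spectrum_eq,
      ← hasEigenvalue_iff_mem_spectrum] at hμ
  have h := hT.mul_norm_sq_le_inner_map_self hTc (e f)
  simp only [dotProduct, ← sq]
  simpa [T, e, PiLp.inner_apply, EuclideanSpace.norm_sq_eq, mul_comm] using h

theorem sum_comp_mul_right {G M : Type*} [Group G] [Fintype G] [AddCommMonoid M] (g : G)
    (h : G → M) : ∑ η, h (η * g) = ∑ η, h η :=
  _root_.Equiv.sum_comp (Equiv.mulRight g) h

theorem sum_sum_sum_comm {ι κ ν M : Type*} [AddCommMonoid M] (u : Finset ι) (s : Finset κ)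
    (t : Finset ν) (F : ι → κ → ν → M) :
    ∑ i ∈ u, ∑ x ∈ s, ∑ y ∈ t, F i x y = ∑ x ∈ s, ∑ y ∈ t, ∑ i ∈ u, F i x y := by
  rw [sum_comm]
  exact sum_congr rfl fun _ _ => sum_comm

section SumOverPairs

variable {α : Type*} [Fintype α] [DecidableEq α]

theorem sum_sum_apply_swap (h : α → ℝ) (v : α) :
    ∑ x, ∑ y, h (swap x y v)
      = 2 * ∑ w, h w + ((Fintype.card α : ℝ) ^ 2 - 2 * Fintype.card α) * h v := by
  have hcard : ((univ.erase v).card : ℝ) = Fintype.card α - 1 := by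
    rw [card_erase_of_mem (mem_univ v), card_univ,
      Nat.cast_sub (Fintype.card_pos_iff.mpr ⟨v⟩), Nat.cast_one]
  have hrow : ∀ x ∈ univ.erase v, ∑ y, h (swap x y v) = h x + (Fintype.card α - 1) * h v := by
    intro x hx
    rw [← add_sum_erase _ _ (mem_univ v), swap_apply_right, ← hcard, ← nsmul_eq_mul,
      ← sum_const]
    exact congrArg _ (sum_congr rfl fun y hy =>
      congrArg h (swap_apply_of_ne_of_ne (ne_of_mem_erase hx).symm (ne_of_mem_erase hy).symm))
  rw [← add_sum_erase _ _ (mem_univ v), sum_congr rfl hrow, sum_add_distrib,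
    sum_erase_eq_sub (mem_univ v), sum_const, nsmul_eq_mul, hcard]
  simp only [swap_apply_left]
  ring

/-- Each pair `x ≠ y` is counted once for each of the `card α - 2` vertices `v ∉ {x, y}`. -/
theorem sum_sum_erase_sum_erase {T : α → α → ℝ} (hT : ∀ x, T x x = 0) :
    ∑ v, ∑ x ∈ univ.erase v, ∑ y ∈ univ.erase v, T x y
      = (Fintype.card α - 2 : ℝ) * ∑ x, ∑ y, T x y := by
  have hv : ∀ v, ∑ x ∈ univ.erase v, ∑ y ∈ univ.erase v, T x y
      = ∑ x, ∑ y, T x y - ∑ y, T v y - ∑ x, T x v := by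
    intro v
    simp only [sum_erase_eq_sub (mem_univ v), sum_sub_distrib, hT]
    ring
  simp only [hv, sum_sub_distrib, sum_const, card_univ, nsmul_eq_mul]
  rw [sum_comm (f := fun v x => T x v)]
  ring

end SumOverPairs

namespace RandomTranspositions

section Generator

variable {α : Type*} [Fintype α] [DecidableEq α]

def edgeEnergy (f : Perm α → ℝ) (x y : α) : ℝ := ∑ η, (f (η * swap x y) - f η) ^ 2

def dirichletForm (f : Perm α → ℝ) : ℝ := ∑ x, ∑ y, edgeEnergy f x y

def generator : Module.End ℝ (Perm α → ℝ) :=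
  ∑ x, ∑ y, (LinearMap.id - LinearMap.funLeft ℝ ℝ (· * swap x y))

def marginal (f : Perm α → ℝ) (v a : α) : ℝ := ∑ η with η v = a, f η

theorem generator_apply (f : Perm α → ℝ) (η : Perm α) :
    generator f η = ∑ x, ∑ y, (f η - f (η * swap x y)) := by
  simp [generator, LinearMap.sum_apply, Finset.sum_apply]

theorem edgeEnergy_self (f : Perm α → ℝ) (x : α) : edgeEnergy f x x = 0 := by
  simp [edgeEnergy, ← Perm.one_def]

theorem edgeEnergy_eq_two_mul_sum (f : Perm α → ℝ) (x y : α) :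
    edgeEnergy f x y = 2 * ∑ η, f η * (f η - f (η * swap x y)) := by
  calc edgeEnergy f x y
      = ∑ η, (f (η * swap x y) ^ 2 - f η ^ 2) + 2 * ∑ η, f η * (f η - f (η * swap x y)) := by
        rw [edgeEnergy, mul_sum, ← sum_add_distrib]
        exact sum_congr rfl fun η _ => by ring
    _ = 2 * ∑ η, f η * (f η - f (η * swap x y)) := by
        rw [sum_sub_distrib, sum_comp_mul_right (swap x y) (f · ^ 2), sub_self, zero_add]

theorem edgeEnergy_comp_mul_right (f : Perm α → ℝ) (p : Perm α) (x y : α) :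
    edgeEnergy (fun η => f (η * p)) x y = edgeEnergy f (p⁻¹ x) (p⁻¹ y) := by
  rw [edgeEnergy, edgeEnergy,
    ← sum_comp_mul_right p (fun σ => (f (σ * swap (p⁻¹ x) (p⁻¹ y)) - f σ) ^ 2)]
  refine sum_congr rfl fun η _ => ?_
  rw [swap_apply_apply]
  group

theorem dirichletForm_nonneg (f : Perm α → ℝ) : 0 ≤ dirichletForm f :=
  sum_nonneg fun _ _ => sum_nonneg fun _ _ => sum_nonneg fun _ _ => sq_nonneg _

theorem dirichletForm_sub_const (f : Perm α → ℝ) (c : ℝ) :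
    dirichletForm (fun η => f η - c) = dirichletForm f := by
  simp [dirichletForm, edgeEnergy]

theorem dirichletForm_eq_two_mul_dotProduct (f : Perm α → ℝ) :
    dirichletForm f = 2 * (f ⬝ᵥ generator f) := by
  simp only [dirichletForm, edgeEnergy_eq_two_mul_sum, dotProduct, generator_apply, mul_sum]
  exact (sum_sum_sum_comm univ univ univ _).symm

theorem generator_dotProduct (f g : Perm α → ℝ) :
    generator f ⬝ᵥ g = f ⬝ᵥ generator g := by
  calc generator f ⬝ᵥ g = ∑ x, ∑ y, ∑ η, (f η - f (η * swap x y)) * g η := by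
        simp only [dotProduct, generator_apply, sum_mul]
        exact sum_sum_sum_comm univ univ univ _
    _ = ∑ x, ∑ y, ∑ η, f η * (g η - g (η * swap x y)) := by
        refine sum_congr rfl fun x _ => sum_congr rfl fun y _ => ?_
        have hswap : ∑ η, f (η * swap x y) * g η = ∑ η, f η * g (η * swap x y) := by
          rw [← sum_comp_mul_right (swap x y) (fun η => f η * g (η * swap x y))]
          simp only [mul_swap_mul_self]
        simp only [sub_mul, mul_sub, sum_sub_distrib, hswap]
    _ = f ⬝ᵥ generator g := by
        simp only [dotProduct, generator_apply, mul_sum]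
        exact (sum_sum_sum_comm univ univ univ _).symm

theorem sum_generator (f : Perm α → ℝ) : ∑ η, generator f η = 0 := by
  simp only [generator_apply]
  rw [sum_sum_sum_comm univ univ univ]
  exact sum_eq_zero fun x _ => sum_eq_zero fun y _ => by
    rw [sum_sub_distrib, sum_comp_mul_right, sub_self]

theorem marginal_smul (c : ℝ) (f : Perm α → ℝ) (v a : α) :
    marginal (c • f) v a = c * marginal f v a := by
  simp [marginal, mul_sum]

theorem sum_marginal (f : Perm α → ℝ) (a : α) : ∑ v, marginal f v a = ∑ η, f η := by
  have hfiber : ∀ v, marginal f v a = ∑ η with η⁻¹ a = v, f η := by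
    intro v
    refine sum_congr ?_ fun _ _ => rfl
    ext η
    simp only [mem_filter, mem_univ, true_and, Perm.inv_def, symm_apply_eq]
    exact eq_comm
  simp only [hfiber, sum_fiberwise]

theorem marginal_comp_mul_right (f : Perm α → ℝ) (p : Perm α) (v a : α) :
    marginal (fun η => f (η * p)) v a = marginal f (p⁻¹ v) a := by
  simp only [marginal, sum_filter]
  rw [← sum_comp_mul_right p (fun σ => if σ (p⁻¹ v) = a then f σ else 0)]
  simp [Perm.mul_apply]

theorem marginal_generator (f : Perm α → ℝ) (v a : α) :
    marginal (generator f) v a = 2 * Fintype.card α * marginal f v a - 2 * ∑ η, f η := by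
  have hcomm : marginal (generator f) v a
      = ∑ x, ∑ y, (marginal f v a - marginal (fun η => f (η * swap x y)) v a) := by
    simp only [marginal, generator_apply, ← sum_sub_distrib]
    exact sum_sum_sum_comm (M := ℝ) _ _ _ _
  rw [hcomm]
  simp only [sum_sub_distrib, marginal_comp_mul_right, swap_inv,
    sum_sum_apply_swap (marginal f · a), sum_marginal, sum_const, card_univ, nsmul_eq_mul]
  ring

/-- Adding `2 |α|` times the orthogonal projection onto the constants moves the eigenvalue `0`
of the constants to `2 |α|`, so that a lower bound on all eigenvalues is a spectral gap. -/
noncomputable def shiftedGenerator : Module.End ℝ (Perm α → ℝ) :=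
  generator + (2 * Fintype.card α / Fintype.card (Perm α) : ℝ) •
    LinearMap.pi fun _ => ∑ η, LinearMap.proj η

theorem shiftedGenerator_apply (f : Perm α → ℝ) (η : Perm α) :
    shiftedGenerator f η
      = generator f η + 2 * Fintype.card α / Fintype.card (Perm α) * ∑ σ, f σ := by
  simp [shiftedGenerator, LinearMap.sum_apply]

theorem shiftedGenerator_eq_generator {f : Perm α → ℝ} (hf : ∑ η, f η = 0) :
    shiftedGenerator f = generator f := by
  ext η
  rw [shiftedGenerator_apply, hf, mul_zero, add_zero]

theorem shiftedGenerator_dotProduct (f g : Perm α → ℝ) :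
    shiftedGenerator f ⬝ᵥ g = f ⬝ᵥ shiftedGenerator g := by
  have h := generator_dotProduct f g
  simp only [dotProduct] at h
  simp only [dotProduct, shiftedGenerator_apply, add_mul, mul_add, sum_add_distrib, h,
    ← sum_mul, ← mul_sum]
  ring

theorem sum_shiftedGenerator (f : Perm α → ℝ) :
    ∑ η, shiftedGenerator f η = 2 * Fintype.card α * ∑ η, f η := by
  have hcard : (Fintype.card (Perm α) : ℝ) ≠ 0 := Nat.cast_ne_zero.mpr Fintype.card_ne_zero
  simp only [shiftedGenerator_apply, sum_add_distrib, sum_generator, sum_const, card_univ,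
    nsmul_eq_mul]
  field_simp
  ring

end Generator

section Induction

open Perm

variable {m : ℕ}

def PoincareAt (n : ℕ) : Prop :=
  ∀ f : Perm (Fin n) → ℝ, ∑ η, f η = 0 → 4 * n * ∑ η, f η ^ 2 ≤ dirichletForm f

theorem sum_perm_fin_succ (X : Perm (Fin (m + 1)) → ℝ) :
    ∑ η, X η = ∑ a, ∑ σ, X (decomposeFin.symm (a, σ)) := by
  rw [← _root_.Equiv.sum_comp decomposeFin.symm, Fintype.sum_prod_type]

theorem decomposeFin_symm_mul_swap (a : Fin (m + 1)) (σ : Perm (Fin m)) (x y : Fin m) :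
    decomposeFin.symm (a, σ * swap x y) = decomposeFin.symm (a, σ) * swap x.succ y.succ := by
  ext z
  induction z using Fin.cases with
  | zero => simp [swap_apply_of_ne_of_ne (Fin.succ_ne_zero x).symm (Fin.succ_ne_zero y).symm]
  | succ w => simp [(Fin.succ_injective m).swap_apply]

theorem marginal_zero (f : Perm (Fin (m + 1)) → ℝ) (a : Fin (m + 1)) :
    marginal f 0 a = ∑ σ, f (decomposeFin.symm (a, σ)) := by
  rw [marginal, sum_filter, sum_perm_fin_succ, sum_comm]
  simp

theorem sum_swap_zero_apply_succ (v : Fin (m + 1)) (h : Fin (m + 1) → ℝ) :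
    ∑ x : Fin m, h (swap 0 v x.succ) = ∑ x ∈ univ.erase v, h x := by
  rw [sum_erase_eq_sub (mem_univ v), ← _root_.Equiv.sum_comp (swap 0 v) h, Fin.sum_univ_succ,
    swap_apply_left, add_sub_cancel_left]

theorem PoincareAt.le_sum_edgeEnergy_succ (ih : PoincareAt m) {f : Perm (Fin (m + 1)) → ℝ}
    (hf : ∀ a, marginal f 0 a = 0) :
    4 * m * ∑ η, f η ^ 2 ≤ ∑ x : Fin m, ∑ y : Fin m, edgeEnergy f x.succ y.succ := by
  set F : Fin (m + 1) → Perm (Fin m) → ℝ := fun a σ => f (decomposeFin.symm (a, σ))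
  have hF : ∀ x y : Fin m, edgeEnergy f x.succ y.succ = ∑ a, edgeEnergy (F a) x y := by
    intro x y
    simp only [edgeEnergy, F, decomposeFin_symm_mul_swap,
      sum_perm_fin_succ (fun η => (f (η * swap x.succ y.succ) - f η) ^ 2)]
  calc 4 * m * ∑ η, f η ^ 2 = ∑ a, 4 * m * ∑ σ, F a σ ^ 2 := by
        rw [sum_perm_fin_succ, mul_sum]
    _ ≤ ∑ a, dirichletForm (F a) :=
        sum_le_sum fun a _ => ih (F a) ((marginal_zero f a).symm.trans (hf a))
    _ = ∑ x : Fin m, ∑ y : Fin m, edgeEnergy f x.succ y.succ := by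
        simp only [hF, dirichletForm]
        exact sum_sum_sum_comm univ univ univ _

theorem PoincareAt.le_sum_erase_edgeEnergy (ih : PoincareAt m) {f : Perm (Fin (m + 1)) → ℝ}
    {v : Fin (m + 1)} (hf : ∀ a, marginal f v a = 0) :
    4 * m * ∑ η, f η ^ 2 ≤ ∑ x ∈ univ.erase v, ∑ y ∈ univ.erase v, edgeEnergy f x y := by
  have hg : ∀ a, marginal (fun η => f (η * swap 0 v)) 0 a = 0 := fun a => by
    rw [marginal_comp_mul_right, swap_inv, swap_apply_left, hf]
  have h := ih.le_sum_edgeEnergy_succ hg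
  simp only [sum_comp_mul_right (swap 0 v) (f · ^ 2), edgeEnergy_comp_mul_right, swap_inv,
    sum_swap_zero_apply_succ v] at h
  rwa [sum_swap_zero_apply_succ v (fun x => ∑ y ∈ univ.erase v, edgeEnergy f x y)] at h

theorem PoincareAt.mul_le_mul_dirichletForm (ih : PoincareAt m) {f : Perm (Fin (m + 1)) → ℝ}
    (hf : ∀ v a, marginal f v a = 0) :
    (m + 1) * (4 * m * ∑ η, f η ^ 2) ≤ (m - 1) * dirichletForm f := by
  calc (m + 1) * (4 * m * ∑ η, f η ^ 2) = ∑ _v : Fin (m + 1), 4 * m * ∑ η, f η ^ 2 := by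
        simp
    _ ≤ ∑ v, ∑ x ∈ univ.erase v, ∑ y ∈ univ.erase v, edgeEnergy f x y :=
        sum_le_sum fun v _ => ih.le_sum_erase_edgeEnergy (hf v)
    _ = (m - 1) * dirichletForm f := by
        rw [sum_sum_erase_sum_erase (edgeEnergy_self f), Fintype.card_fin, dirichletForm]
        push_cast
        ring

theorem PoincareAt.le_of_generator_eq_smul (ih : PoincareAt (m + 1))
    {f : Perm (Fin (m + 2)) → ℝ} (hf : f ≠ 0) (hsum : ∑ η, f η = 0) {μ : ℝ}
    (hμ : generator f = μ • f) : 2 * (m + 2) ≤ μ := by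
  by_cases hmarg : ∃ v a, marginal f v a ≠ 0
  · obtain ⟨v, a, hva⟩ := hmarg
    have h := marginal_generator f v a
    rw [hμ, marginal_smul, hsum, Fintype.card_fin] at h
    refine le_of_eq (mul_right_cancel₀ hva ?_)
    push_cast at h ⊢
    linarith
  · push Not at hmarg
    have hpos : 0 < ∑ η, f η ^ 2 := by
      obtain ⟨η, hη⟩ := Function.ne_iff.mp hf
      exact sum_pos' (fun _ _ => sq_nonneg _) ⟨η, mem_univ η, sq_pos_of_ne_zero hη⟩
    have hform : dirichletForm f = 2 * μ * ∑ η, f η ^ 2 := by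
      rw [dirichletForm_eq_two_mul_dotProduct, hμ, dotProduct_smul, smul_eq_mul]
      simp [dotProduct, sq, mul_assoc]
    have h := ih.mul_le_mul_dirichletForm hmarg
    rw [hform] at h
    push_cast at h
    by_contra! hlt
    nlinarith [mul_nonneg (mul_nonneg m.cast_nonneg hpos.le) (sub_nonneg.2 hlt.le),
      mul_pos hpos (show (0 : ℝ) < m + 2 by positivity)]

theorem PoincareAt.le_of_hasEigenvalue (ih : PoincareAt (m + 1)) {μ : ℝ}
    (hμ : HasEigenvalue (shiftedGenerator (α := Fin (m + 2))) μ) : 2 * (m + 2) ≤ μ := by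
  obtain ⟨f, hf⟩ := hμ.exists_hasEigenvector
  by_cases hsum : ∑ η, f η = 0
  · have h := hf.apply_eq_smul
    rw [shiftedGenerator_eq_generator hsum] at h
    exact ih.le_of_generator_eq_smul hf.2 hsum h
  · have h := sum_shiftedGenerator f
    rw [hf.apply_eq_smul, Fintype.card_fin] at h
    simp only [Pi.smul_apply, smul_eq_mul, ← mul_sum] at h
    push_cast at h
    exact (mul_right_cancel₀ hsum h).ge

theorem PoincareAt.succ (ih : PoincareAt (m + 1)) : PoincareAt (m + 2) := by
  intro f hf
  have h := mul_dotProduct_self_le_of_forall_hasEigenvalue shiftedGenerator_dotProduct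
    (fun _ => ih.le_of_hasEigenvalue) f
  rw [shiftedGenerator_eq_generator hf, dotProduct_comm (generator f)] at h
  rw [dirichletForm_eq_two_mul_dotProduct]
  simp only [dotProduct, ← sq] at h ⊢
  push_cast
  linarith

theorem poincareAt : ∀ n, PoincareAt n
  | 0 => fun f _ => by simpa using dirichletForm_nonneg f
  | 1 => fun f hf => by
    rw [Fintype.sum_unique] at hf ⊢
    rw [hf]
    simpa using dirichletForm_nonneg f
  | m + 2 => (poincareAt (m + 1)).succ

end Induction

variable {d : ℕ}

theorem sum_sub_pexp (f : Perm (Fin d) → ℝ) : ∑ η, (f η - pexp d f) = 0 := by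
  have hfac : (d.factorial : ℝ) ≠ 0 := Nat.cast_ne_zero.mpr d.factorial_ne_zero
  rw [sum_sub_distrib, sum_const, card_univ, Fintype.card_perm, Fintype.card_fin, nsmul_eq_mul,
    pexp, mul_div_cancel₀ _ hfac, sub_self]

theorem pexp_sq_sub_sq_pexp (f : Perm (Fin d) → ℝ) :
    pexp d (fun η => f η ^ 2) - pexp d f ^ 2 = pexp d (fun η => (f η - pexp d f) ^ 2) := by
  have hfac : (d.factorial : ℝ) ≠ 0 := Nat.cast_ne_zero.mpr d.factorial_ne_zero
  simp only [pexp, sub_sq, sum_add_distrib, sum_sub_distrib, ← sum_mul, ← mul_sum, sum_const,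
    card_univ, Fintype.card_perm, Fintype.card_fin, nsmul_eq_mul]
  field_simp
  ring

theorem sum_sum_pexp_eq_dirichletForm_div (f : Perm (Fin d) → ℝ) :
    ∑ x, ∑ y, pexp d (fun η => (f ((swap x y).trans η) - f η) ^ 2)
      = dirichletForm f / d.factorial := by
  simp only [pexp, dirichletForm, edgeEnergy, sum_div, Perm.mul_def]

end RandomTranspositions

open RandomTranspositions in
/-- Poincaré inequality for random transpositions on the complete graph
with `d ≥ 2` vertices and `d` letters:
`Var_d(f) ≤ (1/(4d)) Σ_{x,y} ν_d[(∇_{x,y} f)²]`, where `∇_{x,y} f(η) = f(η^{x,y}) − f(η)`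
and `η^{x,y}` is `η` with the letters at vertices `x` and `y` swapped. -/
theorem randomTranspositions_poincare (d : ℕ) (hd : 2 ≤ d) (f : Equiv.Perm (Fin d) → ℝ) :
    pexp d (fun η => (f η) ^ 2) - (pexp d f) ^ 2 ≤
      (1 / (4 * (d : ℝ))) * ∑ x : Fin d, ∑ y : Fin d,
        pexp d (fun η => (f ((Equiv.swap x y).trans η) - f η) ^ 2) := by
  have hpoincare := poincareAt d _ (sum_sub_pexp f)
  rw [dirichletForm_sub_const] at hpoincare
  have hd_pos : (0 : ℝ) < d := by exact_mod_cast (by omega : 0 < d)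
  rw [pexp_sq_sub_sq_pexp, sum_sum_pexp_eq_dirichletForm_div, pexp]
  field_simp
  linarith
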